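/- arXiv:math/0103025 — 5 statements merged into one kernel-verified Lean document; each statement's English description precedes it below -/
import Mathlib

section
/- The tensor product of two normal g-crystals, equipped with Kashiwara's tensor product rule, is again a normal g-crystal; in particular, for all (a,b) in A × B one has ε_i((a,b)) = max{n | ẽ_i^n (a,b) ≠ 0} and φ_i((a,b)) = max{n | f̃_i^n (a,b) ≠ 0}. -/
/-- The underlying data of a `g`-crystal: the weight map, the maps `ε i`, `φ i`,
and Kashiwara's operators `ẽ i`, `f̃ i` (the value `none` plays the role of `0`). -/
structure CrystalData (I : Type) (A : Type) where
  wt : A → I → ℤ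
  eps : I → A → ℤ
  phi : I → A → ℤ
  e : I → A → Option A
  f : I → A → Option A

namespace CrystalData

/-- Iterate a partially defined map `n` times. -/
def iter {A : Type} (g : A → Option A) : ℕ → A → Option A
  | 0, a => some a
  | n + 1, a => (iter g n a).bind g

variable {I A B : Type}

/-- The crystal axioms, relative to a family of simple roots `α i ∈ ℤ[I]`:
`wt (ẽᵢ a) = wt a + αᵢ`, `wt (f̃ᵢ a) = wt a - αᵢ`, `(wt a)ᵢ = φᵢ a - εᵢ a`,
and `f̃ᵢ a = b ↔ ẽᵢ b = a`. -/
def IsCrystal (α : I → I → ℤ) (Cr : CrystalData I A) : Prop :=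
  (∀ i a b, Cr.e i a = some b → ∀ j, Cr.wt b j = Cr.wt a j + α i j) ∧
  (∀ i a b, Cr.f i a = some b → ∀ j, Cr.wt b j = Cr.wt a j - α i j) ∧
  (∀ i a, Cr.wt a i = Cr.phi i a - Cr.eps i a) ∧
  (∀ i a b, Cr.f i a = some b ↔ Cr.e i b = some a)

/-- Normality: `εᵢ a = max {n | ẽᵢⁿ a ≠ 0}` and `φᵢ a = max {n | f̃ᵢⁿ a ≠ 0}`
(both finite).  Since `ẽᵢⁿ a = 0` implies `ẽᵢ^(n+1) a = 0`, the maximum of the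
set `{n | ẽᵢⁿ a ≠ 0}` is the unique `n ≥ 0` with `ẽᵢⁿ a ≠ 0` and `ẽᵢ^(n+1) a = 0`. -/
def IsNormal (Cr : CrystalData I A) : Prop :=
  ∀ i a,
    (0 ≤ Cr.eps i a ∧ iter (Cr.e i) (Cr.eps i a).toNat a ≠ none ∧
      iter (Cr.e i) ((Cr.eps i a).toNat + 1) a = none) ∧
    (0 ≤ Cr.phi i a ∧ iter (Cr.f i) (Cr.phi i a).toNat a ≠ none ∧
      iter (Cr.f i) ((Cr.phi i a).toNat + 1) a = none)

/-- Kashiwara's tensor product rule on the data of two crystals. -/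
def tensor (CA : CrystalData I A) (CB : CrystalData I B) : CrystalData I (A × B) where
  wt := fun p i => CA.wt p.1 i + CB.wt p.2 i
  eps := fun i p => max (CA.eps i p.1) (CA.eps i p.1 + CB.eps i p.2 - CA.phi i p.1)
  phi := fun i p => max (CB.phi i p.2) (CA.phi i p.1 + CB.phi i p.2 - CB.eps i p.2)
  e := fun i p =>
    if CB.eps i p.2 ≤ CA.phi i p.1 then (CA.e i p.1).map (fun a => (a, p.2))
    else (CB.e i p.2).map (fun b => (p.1, b))
  f := fun i p =>
    if CB.eps i p.2 < CA.phi i p.1 then (CA.f i p.1).map (fun a => (a, p.2))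
    else (CB.f i p.2).map (fun b => (p.1, b))

end CrystalData

/-!
A function `N ≥ 0` is the string length of a partial map `g` (the largest `n` with `gⁿ a ≠ 0`)
exactly when `g a = 0 ↔ N a = 0` and `N` drops by one along each step of `g`; so normality of
`A ⊗ B` reduces to these two local properties of `ε` and `φ`. In the tensor product rule, `ẽᵢ`
acts on the factor whose branch realises the maximum defining `εᵢ (a, b)`, and acting there
lowers that branch by one while keeping it maximal. The same shifts `εᵢ ↦ εᵢ - 1`,
`φᵢ ↦ φᵢ + 1` along `ẽᵢ` show that `f̃ᵢ` and `ẽᵢ` choose the same factor, hence stay inverse.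
-/

namespace CrystalData

section Iter

variable {A : Type} (g : A → Option A)

theorem iter_one (a : A) : iter g 1 a = g a := rfl

theorem iter_succ' (n : ℕ) (a : A) : iter g (n + 1) a = (g a).bind (iter g n) := by
  induction n generalizing a with
  | zero => rw [iter_one]; cases g a <;> rfl
  | succ n ih => rw [iter, ih]; cases g a <;> rfl

theorem iter_eq_none_of_le {m n : ℕ} (hmn : m ≤ n) {a : A} (hm : iter g m a = none) :
    iter g n a = none := by
  induction hmn with
  | refl => exact hm
  | step _ ih => rw [iter, ih]; rfl

theorem iter_ne_none_iff_le {m : ℕ} {a : A} (hm : iter g m a ≠ none)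
    (hm' : iter g (m + 1) a = none) (n : ℕ) : iter g n a ≠ none ↔ n ≤ m :=
  ⟨fun hn => by_contra fun h => hn (iter_eq_none_of_le g (by omega) hm'),
    fun h hn => hm (iter_eq_none_of_le g h hn)⟩

theorem iter_length_of_step (N : A → ℕ) (hzero : ∀ a, g a = none ↔ N a = 0)
    (hstep : ∀ a a', g a = some a' → N a = N a' + 1) (a : A) :
    iter g (N a) a ≠ none ∧ iter g (N a + 1) a = none := by
  induction hN : N a generalizing a with
  | zero => exact ⟨Option.some_ne_none a, by rw [iter_one, hzero, hN]⟩
  | succ n ih =>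
    obtain ⟨a', ha'⟩ := Option.ne_none_iff_exists'.mp (mt (hzero a).mp (by omega))
    rw [iter_succ', iter_succ', ha']
    exact ih a' (by have := hstep a a' ha'; omega)

end Iter

def IsStringLength {A : Type} (g : A → Option A) (N : A → ℤ) : Prop :=
  ∀ a, 0 ≤ N a ∧ iter g (N a).toNat a ≠ none ∧ iter g ((N a).toNat + 1) a = none

namespace IsStringLength

variable {A : Type} {g : A → Option A} {N : A → ℤ}

theorem nonneg (h : IsStringLength g N) (a : A) : 0 ≤ N a := (h a).1

theorem iter_ne_none_iff (h : IsStringLength g N) (a : A) (n : ℕ) :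
    iter g n a ≠ none ↔ n ≤ (N a).toNat :=
  iter_ne_none_iff_le g (h a).2.1 (h a).2.2 n

theorem eq_none_iff (h : IsStringLength g N) (a : A) : g a = none ↔ N a = 0 := by
  have h1 := h.iter_ne_none_iff a 1
  rw [iter_one] at h1
  rw [← not_iff_not, ← ne_eq, h1]
  have := h.nonneg a
  omega

theorem eq_add_one (h : IsStringLength g N) {a a' : A} (ha : g a = some a') :
    N a = N a' + 1 := by
  have hshift (n : ℕ) : iter g (n + 1) a = iter g n a' := by rw [iter_succ', ha]; rfl
  have h1 := h.iter_ne_none_iff a ((N a').toNat + 1)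
  have h2 := h.iter_ne_none_iff a ((N a').toNat + 1 + 1)
  rw [hshift, h.iter_ne_none_iff a'] at h1 h2
  have := h.nonneg a
  have := h.nonneg a'
  omega

end IsStringLength

theorem isStringLength_of_step {A : Type} {g : A → Option A} {N : A → ℤ}
    (hnonneg : ∀ a, 0 ≤ N a) (hzero : ∀ a, g a = none ↔ N a = 0)
    (hstep : ∀ a a', g a = some a' → N a = N a' + 1) : IsStringLength g N := fun a =>
  ⟨hnonneg a, iter_length_of_step g (fun a => (N a).toNat)
    (fun a => (hzero a).trans (by have := hnonneg a; omega))
    (fun a a' ha => by have := hstep a a' ha; have := hnonneg a'; omega) a⟩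

variable {I A B : Type}

theorem isNormal_iff {Cr : CrystalData I A} :
    IsNormal Cr ↔
      ∀ i, IsStringLength (Cr.e i) (Cr.eps i) ∧ IsStringLength (Cr.f i) (Cr.phi i) := by
  simp only [IsNormal, IsStringLength, forall_and]

theorem IsNormal.isStringLength_e {Cr : CrystalData I A} (hn : IsNormal Cr) (i : I) :
    IsStringLength (Cr.e i) (Cr.eps i) :=
  (isNormal_iff.mp hn i).1

theorem IsNormal.isStringLength_f {Cr : CrystalData I A} (hn : IsNormal Cr) (i : I) :
    IsStringLength (Cr.f i) (Cr.phi i) :=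
  (isNormal_iff.mp hn i).2

theorem IsCrystal.eps_phi_of_e_eq_some {α : I → I → ℤ} {Cr : CrystalData I A}
    (hc : IsCrystal α Cr) (hn : IsNormal Cr) {i : I} {a a' : A} (h : Cr.e i a = some a') :
    Cr.eps i a = Cr.eps i a' + 1 ∧ Cr.phi i a' = Cr.phi i a + 1 :=
  ⟨(hn.isStringLength_e i).eq_add_one h,
    (hn.isStringLength_f i).eq_add_one ((hc.2.2.2 i a' a).mpr h)⟩

section Tensor

variable {α : I → I → ℤ} {CA : CrystalData I A} {CB : CrystalData I B}
  {i : I} {a a' : A} {b b' : B}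

theorem tensor_e_eq_some_iff :
    (CA.tensor CB).e i (a, b) = some (a', b') ↔
      CB.eps i b ≤ CA.phi i a ∧ CA.e i a = some a' ∧ b' = b ∨
      CA.phi i a < CB.eps i b ∧ a' = a ∧ CB.e i b = some b' := by
  simp only [tensor]
  split_ifs with h <;> simp [h] <;> grind

theorem tensor_f_eq_some_iff :
    (CA.tensor CB).f i (a, b) = some (a', b') ↔
      CB.eps i b < CA.phi i a ∧ CA.f i a = some a' ∧ b' = b ∨
      CA.phi i a ≤ CB.eps i b ∧ a' = a ∧ CB.f i b = some b' := by
  simp only [tensor]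
  split_ifs with h <;> simp [h] <;> grind

theorem tensor_e_eq_none_iff (hnA : IsNormal CA) (hnB : IsNormal CB) :
    (CA.tensor CB).e i (a, b) = none ↔ (CA.tensor CB).eps i (a, b) = 0 := by
  have := (hnA.isStringLength_e i).nonneg a
  have := (hnA.isStringLength_f i).nonneg a
  simp only [tensor]
  split_ifs
  · rw [Option.map_eq_none_iff, (hnA.isStringLength_e i).eq_none_iff]
    omega
  · rw [Option.map_eq_none_iff, (hnB.isStringLength_e i).eq_none_iff]
    omega

theorem tensor_f_eq_none_iff (hnA : IsNormal CA) (hnB : IsNormal CB) :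
    (CA.tensor CB).f i (a, b) = none ↔ (CA.tensor CB).phi i (a, b) = 0 := by
  have := (hnB.isStringLength_e i).nonneg b
  have := (hnB.isStringLength_f i).nonneg b
  simp only [tensor]
  split_ifs
  · rw [Option.map_eq_none_iff, (hnA.isStringLength_f i).eq_none_iff]
    omega
  · rw [Option.map_eq_none_iff, (hnB.isStringLength_f i).eq_none_iff]
    omega

theorem tensor_eps_eq_add_one (hA : IsCrystal α CA) (hB : IsCrystal α CB)
    (hnA : IsNormal CA) (hnB : IsNormal CB) {p q : A × B}
    (h : (CA.tensor CB).e i p = some q) :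
    (CA.tensor CB).eps i p = (CA.tensor CB).eps i q + 1 := by
  obtain ⟨a, b⟩ := p
  obtain ⟨a', b'⟩ := q
  simp only [tensor]
  rcases tensor_e_eq_some_iff.mp h with ⟨hle, ha, rfl⟩ | ⟨hlt, rfl, hb⟩
  · have := hA.eps_phi_of_e_eq_some hnA ha
    omega
  · have := hB.eps_phi_of_e_eq_some hnB hb
    omega

theorem tensor_phi_eq_add_one (hA : IsCrystal α CA) (hB : IsCrystal α CB)
    (hnA : IsNormal CA) (hnB : IsNormal CB) {p q : A × B}
    (h : (CA.tensor CB).f i p = some q) :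
    (CA.tensor CB).phi i p = (CA.tensor CB).phi i q + 1 := by
  obtain ⟨a, b⟩ := p
  obtain ⟨a', b'⟩ := q
  simp only [tensor]
  rcases tensor_f_eq_some_iff.mp h with ⟨hlt, ha, rfl⟩ | ⟨hle, rfl, hb⟩
  · have := hA.eps_phi_of_e_eq_some hnA ((hA.2.2.2 i a a').mp ha)
    omega
  · have := hB.eps_phi_of_e_eq_some hnB ((hB.2.2.2 i b b').mp hb)
    omega

theorem tensor_f_eq_some_iff_e_eq_some (hA : IsCrystal α CA) (hB : IsCrystal α CB)
    (hnA : IsNormal CA) (hnB : IsNormal CB) :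
    (CA.tensor CB).f i (a, b) = some (a', b') ↔ (CA.tensor CB).e i (a', b') = some (a, b) := by
  rw [tensor_f_eq_some_iff, tensor_e_eq_some_iff, hA.2.2.2, hB.2.2.2]
  constructor
  · rintro (⟨hlt, ha, rfl⟩ | ⟨hle, rfl, hb⟩)
    · have := hA.eps_phi_of_e_eq_some hnA ha
      exact Or.inl ⟨by omega, ha, rfl⟩
    · have := hB.eps_phi_of_e_eq_some hnB hb
      exact Or.inr ⟨by omega, rfl, hb⟩
  · rintro (⟨hle, ha, rfl⟩ | ⟨hlt, rfl, hb⟩)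
    · have := hA.eps_phi_of_e_eq_some hnA ha
      exact Or.inl ⟨by omega, ha, rfl⟩
    · have := hB.eps_phi_of_e_eq_some hnB hb
      exact Or.inr ⟨by omega, rfl, hb⟩

theorem IsNormal.tensor (hA : IsCrystal α CA) (hB : IsCrystal α CB)
    (hnA : IsNormal CA) (hnB : IsNormal CB) : IsNormal (CA.tensor CB) := by
  refine isNormal_iff.mpr fun i => ⟨?_, ?_⟩
  · refine isStringLength_of_step (fun p => ?_) (fun p => tensor_e_eq_none_iff hnA hnB)
      (fun p q => tensor_eps_eq_add_one hA hB hnA hnB)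
    exact ((hnA.isStringLength_e i).nonneg p.1).trans (le_max_left _ _)
  · refine isStringLength_of_step (fun p => ?_) (fun p => tensor_f_eq_none_iff hnA hnB)
      (fun p q => tensor_phi_eq_add_one hA hB hnA hnB)
    exact ((hnB.isStringLength_f i).nonneg p.2).trans (le_max_left _ _)

theorem IsCrystal.tensor (hA : IsCrystal α CA) (hB : IsCrystal α CB)
    (hnA : IsNormal CA) (hnB : IsNormal CB) : IsCrystal α (CA.tensor CB) := by
  refine ⟨?_, ?_, ?_, ?_⟩
  · rintro i ⟨a, b⟩ ⟨a', b'⟩ h j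
    simp only [CrystalData.tensor]
    rcases tensor_e_eq_some_iff.mp h with ⟨-, ha, rfl⟩ | ⟨-, rfl, hb⟩
    · linarith [hA.1 i a a' ha j]
    · linarith [hB.1 i b b' hb j]
  · rintro i ⟨a, b⟩ ⟨a', b'⟩ h j
    simp only [CrystalData.tensor]
    rcases tensor_f_eq_some_iff.mp h with ⟨-, ha, rfl⟩ | ⟨-, rfl, hb⟩
    · linarith [hA.2.1 i a a' ha j]
    · linarith [hB.2.1 i b b' hb j]
  · rintro i ⟨a, b⟩
    simp only [CrystalData.tensor]
    have := hA.2.2.1 i a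
    have := hB.2.2.1 i b
    omega
  · rintro i ⟨a, b⟩ ⟨a', b'⟩
    exact tensor_f_eq_some_iff_e_eq_some hA hB hnA hnB

end Tensor

end CrystalData

/-- The tensor product of two normal `g`-crystals, with Kashiwara's tensor product
rule, is again a normal `g`-crystal; in particular `ε i` and `φ i` of the tensor
product are given by `max {n | ẽᵢⁿ (a,b) ≠ 0}` resp. `max {n | f̃ᵢⁿ (a,b) ≠ 0}`. -/
theorem stmt1 {I A B : Type} (α : I → I → ℤ)
    (CA : CrystalData I A) (CB : CrystalData I B)
    (hA : CrystalData.IsCrystal α CA) (hB : CrystalData.IsCrystal α CB)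
    (hnA : CrystalData.IsNormal CA) (hnB : CrystalData.IsNormal CB) :
    CrystalData.IsCrystal α (CA.tensor CB) ∧ CrystalData.IsNormal (CA.tensor CB) :=
  ⟨hA.tensor hB hnA hnB, .tensor hA hB hnA hnB⟩
end

section
/- Let D be a complex vector space of dimension d with a subspace D¹ of dimension d¹, and set d² = d − d¹. The set of endomorphisms t of D with t² = 0, t(D¹) ⊆ D¹, rank t = v, rank(t|_{D¹}) = v¹, and rank of the induced map on D/D¹ equal to v², is nonempty if and only if v¹ + v² ≤ v, v ≤ d² − v² + v¹, and v ≤ d¹ − v¹ + v². -/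
open Module Submodule LinearMap

theorem span_range_eq_of' {K M ι κ : Type*} [Field K] [AddCommGroup M] [Module K M]
    (g : ι → M) (b : κ → M) (h1 : ∀ i, g i = 0 ∨ ∃ k, g i = b k)
    (h2 : ∀ k, ∃ i, b k = g i) :
    Submodule.span K (Set.range g) = Submodule.span K (Set.range b) := by
  apply le_antisymm
  · rw [← Submodule.span_insert_zero (s := Set.range b)]
    apply Submodule.span_mono
    rintro x ⟨i, rfl⟩
    rcases h1 i with h | ⟨k, hk⟩
    · exact Or.inl h
    · exact Or.inr ⟨k, hk.symm⟩
  · apply Submodule.span_mono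
    rintro x ⟨k, rfl⟩
    obtain ⟨i, hi⟩ := h2 k
    exact ⟨i, hi.symm⟩

theorem finrank_span_comp' {K M ι : Type*} [Field K] [AddCommGroup M] [Module K M]
    {n : ℕ} {b : ι → M} (hb : LinearIndependent K b) (σ : Fin n → ι)
    (hσ : Function.Injective σ) :
    Module.finrank K (Submodule.span K (Set.range (b ∘ σ))) = n := by
  rw [finrank_span_eq_card (hb.comp σ hσ), Fintype.card_fin]

theorem finrank_comap_subtype' (K V : Type) [Field K] [AddCommGroup V] [Module K V]
    (p q : Submodule K V) :
    finrank K (comap p.subtype q) = finrank K (q ⊓ p : Submodule K V) := by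
  have h : comap p.subtype q = comap p.subtype (q ⊓ p) := by
    ext x; simp [x.2]
  rw [h]
  exact (Submodule.comapSubtypeEquivOfLe inf_le_right).finrank_eq

theorem rank_nullity_on' (K V W : Type) [Field K] [AddCommGroup V] [Module K V]
    [AddCommGroup W] [Module K W] [FiniteDimensional K V]
    (t : V →ₗ[K] W) (p : Submodule K V) :
    finrank K (p.map t) + finrank K (LinearMap.ker t ⊓ p : Submodule K V) = finrank K p := by
  have h1 : LinearMap.range (t ∘ₗ p.subtype) = p.map t := by
    rw [LinearMap.range_comp, Submodule.range_subtype]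
  have h2 : LinearMap.ker (t ∘ₗ p.subtype) = comap p.subtype (LinearMap.ker t) := by
    rw [LinearMap.ker_comp]
  have := LinearMap.finrank_range_add_finrank_ker (t ∘ₗ p.subtype)
  rwa [h1, h2, finrank_comap_subtype'] at this

theorem map_range_restrict' (K V W : Type) [Field K] [AddCommGroup V] [Module K V]
    [AddCommGroup W] [Module K W]
    (t : V →ₗ[K] W) (p : Submodule K V) (q : Submodule K W) (h : ∀ x ∈ p, t x ∈ q) :
    (LinearMap.range (t.restrict h)).map q.subtype = p.map t := by
  ext x
  simp only [Submodule.mem_map, LinearMap.mem_range]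
  constructor
  · rintro ⟨y, ⟨z, rfl⟩, rfl⟩
    exact ⟨z, z.2, (t.restrict_coe_apply h z).symm⟩
  · rintro ⟨z, hz, rfl⟩
    exact ⟨⟨t z, h z hz⟩, ⟨⟨⟨z, hz⟩, rfl⟩, rfl⟩⟩

theorem range_mapQ' (K V : Type) [Field K] [AddCommGroup V] [Module K V]
    (t : V →ₗ[K] V) (p : Submodule K V) (h : p ≤ Submodule.comap t p) :
    LinearMap.range (p.mapQ p t h) = (LinearMap.range t).map p.mkQ := by
  have hc := Submodule.mapQ_mkQ p p t (h := h)
  calc LinearMap.range (p.mapQ p t h)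
      = LinearMap.range ((p.mapQ p t h).comp p.mkQ) := by
        rw [LinearMap.range_comp, Submodule.range_mkQ, Submodule.map_top]
    _ = LinearMap.range (p.mkQ.comp t) := by rw [hc]
    _ = (LinearMap.range t).map p.mkQ := by rw [LinearMap.range_comp]

/-- Let `D` be a complex vector space of dimension `d = d₁ + d₂` with a subspace
`D₁` of dimension `d₁`.  There exists `t ∈ End D` with `t₂ = 0`, `t(D₁) ⊆ D₁`,
`rank t = v`, `rank (t|_{D₁}) = v₁` and rank of the induced map on `D/D₁` equal
to `v₂` if and only if `v₁ + v₂ ≤ v`, `v ≤ d₂ - v₂ + v₁` and `v ≤ d₁ - v₁ + v₂`. -/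
theorem stmt6 (d₁ d₂ v v₁ v₂ : ℕ) (D : Type) [AddCommGroup D] [Module ℂ D]
    [FiniteDimensional ℂ D] (D₁ : Submodule ℂ D)
    (hD : Module.finrank ℂ D = d₁ + d₂) (hD1 : Module.finrank ℂ D₁ = d₁) :
    (∃ (t : D →ₗ[ℂ] D) (hinv : ∀ x ∈ D₁, t x ∈ D₁),
        t ∘ₗ t = 0 ∧
        Module.finrank ℂ (LinearMap.range t) = v ∧
        Module.finrank ℂ (LinearMap.range (t.restrict hinv)) = v₁ ∧
        Module.finrank ℂ
          (LinearMap.range (D₁.mapQ D₁ t (fun x hx => hinv x hx))) = v₂) ↔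
      (v₁ + v₂ ≤ v ∧ (v : ℤ) ≤ (d₂ : ℤ) - v₂ + v₁ ∧ (v : ℤ) ≤ (d₁ : ℤ) - v₁ + v₂) := by
  constructor
  · rintro ⟨t, hinv, ht2, hv, hv₁, hv₂⟩
    set R := LinearMap.range t with hR
    set R₁ := D₁.map t with hR₁def
    have hfr1 : finrank ℂ R₁ = v₁ := by
      rw [← hv₁, ← Submodule.finrank_map_subtype_eq D₁ (LinearMap.range (t.restrict hinv)),
        map_range_restrict']
    have hRk : R ≤ LinearMap.ker t := by
      rintro x ⟨y, rfl⟩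
      have : t (t y) = 0 := by
        have := congrFun (congrArg (fun f => f.toFun) ht2) y
        simpa using this
      simpa [LinearMap.mem_ker] using this
    have hQ : LinearMap.range (D₁.mapQ D₁ t (fun x hx => hinv x hx)) = R.map D₁.mkQ :=
      range_mapQ' ℂ D t D₁ (fun x hx => hinv x hx)
    rw [hQ] at hv₂
    have key1 : v₂ + finrank ℂ (D₁ ⊓ R : Submodule ℂ D) = v := by
      have := rank_nullity_on' ℂ D (D ⧸ D₁) D₁.mkQ R
      rwa [hv₂, Submodule.ker_mkQ, hv] at this
    have hB : v₁ ≤ finrank ℂ (D₁ ⊓ R : Submodule ℂ D) := by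
      rw [← hfr1]
      exact Submodule.finrank_mono (le_inf (Submodule.map_le_iff_le_comap.2
        (fun x hx => hinv x hx)) (LinearMap.map_le_range))
    have hC : v₁ + finrank ℂ (LinearMap.ker t ⊓ D₁ : Submodule ℂ D) = d₁ := by
      have := rank_nullity_on' ℂ D D t D₁
      rwa [← hR₁def, hfr1, hD1] at this
    have hDle : finrank ℂ (D₁ ⊓ R : Submodule ℂ D) ≤
        finrank ℂ (LinearMap.ker t ⊓ D₁ : Submodule ℂ D) :=
      Submodule.finrank_mono (by rw [inf_comm (LinearMap.ker t)]; exact inf_le_inf_left _ hRk)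
    have hker : finrank ℂ (LinearMap.ker t) + v = d₁ + d₂ := by
      have := LinearMap.finrank_range_add_finrank_ker t
      rw [hv, hD] at this; omega
    have hE : finrank ℂ (Submodule.comap t R₁) =
        v₁ + finrank ℂ (LinearMap.ker t) := by
      have h1 := rank_nullity_on' ℂ D D t (Submodule.comap t R₁)
      have h2 : (Submodule.comap t R₁).map t = R₁ := by
        rw [Submodule.map_comap_eq, inf_eq_right.2 LinearMap.map_le_range]
      have h3 : LinearMap.ker t ⊓ Submodule.comap t R₁ = LinearMap.ker t := by
        rw [inf_eq_left]
        intro x hx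
        simp only [Submodule.mem_comap, LinearMap.mem_ker.1 hx]
        exact Submodule.zero_mem _
      rw [h2, h3, hfr1] at h1
      omega
    have hF : finrank ℂ (D₁ ⊔ R : Submodule ℂ D) ≤ finrank ℂ (Submodule.comap t R₁) := by
      apply Submodule.finrank_mono
      apply sup_le
      · intro x hx
        exact Submodule.mem_comap.2 (Submodule.mem_map_of_mem hx)
      · exact le_trans hRk (fun x hx => Submodule.mem_comap.2
          (by simp [LinearMap.mem_ker.1 hx, Submodule.zero_mem]))
    have hsupinf := Submodule.finrank_sup_add_finrank_inf_eq D₁ R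
    rw [hD1, hv] at hsupinf
    rw [hE] at hF
    refine ⟨by omega, by omega, by omega⟩
  · rintro ⟨h1, h2, h3⟩
    set w := v - v₁ - v₂ with hwdef
    have hw : v = v₁ + v₂ + w := by omega
    have hd1 : 2 * v₁ + w ≤ d₁ := by omega
    have hd2 : 2 * v₂ + w ≤ d₂ := by omega
    obtain ⟨W, hWc⟩ := Submodule.exists_isCompl D₁
    have hWd : Module.finrank ℂ W = d₂ := by
      have := Submodule.finrank_add_eq_of_isCompl hWc
      rw [hD1, hD] at this; omega
    obtain ⟨e, hedef⟩ : ∃ x : Basis (Fin d₁) ℂ D₁, x = Module.finBasisOfFinrankEq ℂ D₁ hD1 :=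
      ⟨_, rfl⟩
    obtain ⟨f, hfdef⟩ : ∃ x : Basis (Fin d₂) ℂ W, x = Module.finBasisOfFinrankEq ℂ W hWd :=
      ⟨_, rfl⟩
    obtain ⟨B, hBdef⟩ : ∃ x : Basis (Fin d₁ ⊕ Fin d₂) ℂ D,
        x = (e.prod f).map (Submodule.prodEquivOfIsCompl D₁ W hWc) := ⟨_, rfl⟩
    have hBl : ∀ i, B (Sum.inl i) = (e i : D) := by
      intro i
      simp [hBdef, Basis.map_apply, Basis.prod_apply, Submodule.coe_prodEquivOfIsCompl']
    have hBr : ∀ j, B (Sum.inr j) = (f j : D) := by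
      intro j
      simp [hBdef, Basis.map_apply, Basis.prod_apply, Submodule.coe_prodEquivOfIsCompl']
    have hBlD : ∀ i, B (Sum.inl i) ∈ D₁ := fun i => (hBl i) ▸ (e i).2
    -- the target function
    obtain ⟨g₁, hg1def⟩ : ∃ x : Fin d₁ → D, x = fun (i : Fin d₁) =>
        if h : (i : ℕ) < v₁ then B (Sum.inl ⟨v₁ + (i : ℕ), by omega⟩) else 0 := ⟨_, rfl⟩
    obtain ⟨g₂, hg2def⟩ : ∃ x : Fin d₂ → D, x = fun (j : Fin d₂) =>
        if h : (j : ℕ) < v₂ then B (Sum.inr ⟨v₂ + (j : ℕ), by omega⟩)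
        else if h' : 2 * v₂ ≤ (j : ℕ) ∧ (j : ℕ) < 2 * v₂ + w then
          B (Sum.inl ⟨2 * v₁ + ((j : ℕ) - 2 * v₂), by omega⟩)
        else 0 := ⟨_, rfl⟩
    obtain ⟨g, hgdef⟩ : ∃ x : Fin d₁ ⊕ Fin d₂ → D, x = Sum.elim g₁ g₂ := ⟨_, rfl⟩
    -- value lemmas
    have hg1v : ∀ (n : ℕ) (hn : n < d₁) (h : n < v₁),
        g₁ ⟨n, hn⟩ = B (.inl ⟨v₁ + n, by omega⟩) := by
      intro n hn h
      simp only [hg1def, Fin.val_mk]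
      rw [dif_pos h]
    have hg1z : ∀ (n : ℕ) (hn : n < d₁) (h : ¬ n < v₁), g₁ ⟨n, hn⟩ = 0 := by
      intro n hn h
      simp only [hg1def, Fin.val_mk]
      rw [dif_neg h]
    have hg2v : ∀ (n : ℕ) (hn : n < d₂) (h : n < v₂),
        g₂ ⟨n, hn⟩ = B (.inr ⟨v₂ + n, by omega⟩) := by
      intro n hn h
      simp only [hg2def, Fin.val_mk]
      rw [dif_pos h]
    have hg2m : ∀ (n : ℕ) (hn : n < d₂) (h : 2 * v₂ ≤ n ∧ n < 2 * v₂ + w),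
        g₂ ⟨n, hn⟩ = B (.inl ⟨2 * v₁ + (n - 2 * v₂), by omega⟩) := by
      intro n hn h
      simp only [hg2def, Fin.val_mk]
      rw [dif_neg (show ¬ n < v₂ by omega), dif_pos h]
    have hg2z : ∀ (n : ℕ) (hn : n < d₂) (h : ¬ n < v₂)
        (h' : ¬(2 * v₂ ≤ n ∧ n < 2 * v₂ + w)), g₂ ⟨n, hn⟩ = 0 := by
      intro n hn h h'
      simp only [hg2def, Fin.val_mk]
      rw [dif_neg h, dif_neg h']
    have hg1D : ∀ i, g₁ i ∈ D₁ := by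
      rintro ⟨n, hn⟩
      by_cases h : n < v₁
      · rw [hg1v n hn h]; exact hBlD _
      · rw [hg1z n hn h]; exact Submodule.zero_mem _
    obtain ⟨t, htdef⟩ : ∃ x : D →ₗ[ℂ] D, x = B.constr ℂ g := ⟨_, rfl⟩
    have hBg : ∀ idx, t (B idx) = g idx := fun idx => htdef ▸ B.constr_basis ℂ g idx
    -- t ∘ t = 0
    have tg0 : ∀ idx, t (g idx) = 0 := by
      rintro (⟨n, hn⟩ | ⟨n, hn⟩) <;>
        simp only [hgdef, Sum.elim_inl, Sum.elim_inr]
      · by_cases h : n < v₁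
        · rw [hg1v n hn h, hBg]
          simp only [hgdef, Sum.elim_inl]
          rw [hg1z _ _ (by omega)]
        · rw [hg1z n hn h, map_zero]
      · by_cases h : n < v₂
        · rw [hg2v n hn h, hBg]
          simp only [hgdef, Sum.elim_inr]
          rw [hg2z _ _ (by omega) (by omega)]
        · by_cases h' : 2 * v₂ ≤ n ∧ n < 2 * v₂ + w
          · rw [hg2m n hn h', hBg]
            simp only [hgdef, Sum.elim_inl]
            rw [hg1z _ _ (by omega)]
          · rw [hg2z n hn h h', map_zero]
    have ht2 : t ∘ₗ t = 0 := by
      apply B.ext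
      intro idx
      simp only [LinearMap.comp_apply, LinearMap.zero_apply, hBg, tg0]
    -- D₁ as a span
    have hspan1 : Submodule.span ℂ (Set.range (fun i => B (Sum.inl i))) = D₁ := by
      have he : (fun i => B (Sum.inl i)) = D₁.subtype ∘ e := funext fun i => hBl i
      rw [he, Set.range_comp, Submodule.span_image, e.span_eq, Submodule.map_top,
        Submodule.range_subtype]
    have hinv : ∀ x ∈ D₁, t x ∈ D₁ := by
      intro x hx
      rw [← hspan1] at hx
      refine Submodule.span_induction ?_ ?_ ?_ ?_ hx
      · rintro y ⟨i, rfl⟩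
        rw [hBg]
        simp only [hgdef, Sum.elim_inl]
        exact hg1D i
      · simp
      · intro a b _ _ ha hb; rw [map_add]; exact Submodule.add_mem _ ha hb
      · intro c a _ ha; rw [map_smul]; exact Submodule.smul_mem _ c ha
    -- range t as a span
    have hrange : LinearMap.range t = Submodule.span ℂ (Set.range g) := by
      rw [← Submodule.map_top, ← B.span_eq, Submodule.map_span, ← Set.range_comp]
      congr 1
      exact congrArg _ (funext hBg)
    -- index injection for rank v
    obtain ⟨σ, hσdef⟩ : ∃ x : Fin v → Fin d₁ ⊕ Fin d₂, x = fun (k : Fin v) =>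
        if h : (k : ℕ) < v₁ then Sum.inl ⟨v₁ + (k : ℕ), by omega⟩
        else if h' : (k : ℕ) < v₁ + v₂ then Sum.inr ⟨v₂ + ((k : ℕ) - v₁), by omega⟩
        else Sum.inl ⟨2 * v₁ + ((k : ℕ) - v₁ - v₂), by omega⟩ := ⟨_, rfl⟩
    have hσ1 : ∀ (n : ℕ) (hn : n < v) (h : n < v₁),
        σ ⟨n, hn⟩ = .inl ⟨v₁ + n, by omega⟩ := by
      intro n hn h
      simp only [hσdef, Fin.val_mk]
      rw [dif_pos h]
    have hσ2 : ∀ (n : ℕ) (hn : n < v) (h : ¬ n < v₁) (h' : n < v₁ + v₂),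
        σ ⟨n, hn⟩ = .inr ⟨v₂ + (n - v₁), by omega⟩ := by
      intro n hn h h'
      simp only [hσdef, Fin.val_mk]
      rw [dif_neg h, dif_pos h']
    have hσ3 : ∀ (n : ℕ) (hn : n < v) (h : ¬ n < v₁) (h' : ¬ n < v₁ + v₂),
        σ ⟨n, hn⟩ = .inl ⟨2 * v₁ + (n - v₁ - v₂), by omega⟩ := by
      intro n hn h h'
      simp only [hσdef, Fin.val_mk]
      rw [dif_neg h, dif_neg h']
    have hσinj : Function.Injective σ := by
      rintro ⟨a, ha⟩ ⟨b, hb⟩ hab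
      by_cases ha1 : a < v₁ <;> by_cases hb1 : b < v₁ <;>
        by_cases ha2 : a < v₁ + v₂ <;> by_cases hb2 : b < v₁ + v₂ <;>
        try omega
      all_goals
        first
          | rw [hσ1 a ha ha1] at hab
          | rw [hσ2 a ha ha1 ha2] at hab
          | rw [hσ3 a ha ha1 ha2] at hab
      all_goals
        first
          | rw [hσ1 b hb hb1] at hab
          | rw [hσ2 b hb hb1 hb2] at hab
          | rw [hσ3 b hb hb1 hb2] at hab
      all_goals
        first
          | exact (Sum.inl_ne_inr hab).elim
          | exact (Sum.inr_ne_inl hab).elim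
          | (simp only [Sum.inl.injEq, Sum.inr.injEq, Fin.mk.injEq] at hab
             exact Fin.ext (by simp only [Fin.val_mk]; omega))
    have hgσ1 : ∀ idx, g idx = 0 ∨ ∃ k, g idx = (B ∘ σ) k := by
      rintro (⟨n, hn⟩ | ⟨n, hn⟩) <;> simp only [hgdef, Sum.elim_inl, Sum.elim_inr]
      · by_cases h : n < v₁
        · refine Or.inr ⟨⟨n, by omega⟩, ?_⟩
          rw [hg1v n hn h]
          simp only [Function.comp_apply]
          rw [hσ1 n _ h]
        · rw [hg1z n hn h]; exact Or.inl rfl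
      · by_cases h : n < v₂
        · refine Or.inr ⟨⟨v₁ + n, by omega⟩, ?_⟩
          rw [hg2v n hn h]
          simp only [Function.comp_apply]
          rw [hσ2 (v₁ + n) _ (by omega) (by omega)]
          congr 2
          exact Fin.ext (by simp only [Fin.val_mk]; omega)
        · by_cases h' : 2 * v₂ ≤ n ∧ n < 2 * v₂ + w
          · refine Or.inr ⟨⟨v₁ + v₂ + (n - 2 * v₂), by omega⟩, ?_⟩
            rw [hg2m n hn h']
            simp only [Function.comp_apply]
            rw [hσ3 (v₁ + v₂ + (n - 2 * v₂)) _ (by omega) (by omega)]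
            congr 2
            exact Fin.ext (by simp only [Fin.val_mk]; omega)
          · rw [hg2z n hn h h']; exact Or.inl rfl
    have hgσ2' : ∀ k, ∃ idx, (B ∘ σ) k = g idx := by
      rintro ⟨n, hn⟩
      simp only [Function.comp_apply]
      by_cases h : n < v₁
      · refine ⟨Sum.inl ⟨n, by omega⟩, ?_⟩
        rw [hσ1 n hn h]
        simp only [hgdef, Sum.elim_inl]
        rw [hg1v n _ h]
      · by_cases h' : n < v₁ + v₂
        · refine ⟨Sum.inr ⟨n - v₁, by omega⟩, ?_⟩
          rw [hσ2 n hn h h']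
          simp only [hgdef, Sum.elim_inr]
          rw [hg2v (n - v₁) _ (by omega)]
        · refine ⟨Sum.inr ⟨2 * v₂ + (n - v₁ - v₂), by omega⟩, ?_⟩
          rw [hσ3 n hn h h']
          simp only [hgdef, Sum.elim_inr]
          rw [hg2m (2 * v₂ + (n - v₁ - v₂)) _ (by omega)]
          congr 2
          exact Fin.ext (by simp only [Fin.val_mk]; omega)
    have hv : Module.finrank ℂ (LinearMap.range t) = v := by
      rw [hrange, span_range_eq_of' g (B ∘ σ) hgσ1 hgσ2',
        finrank_span_comp' B.linearIndependent σ hσinj]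
    -- rank of restriction
    have hmapD₁ : D₁.map t = Submodule.span ℂ (Set.range (fun i => g (Sum.inl i))) := by
      rw [← hspan1, Submodule.map_span, ← Set.range_comp]
      congr 1
      exact congrArg _ (funext fun i => hBg (Sum.inl i))
    obtain ⟨τ, hτdef⟩ : ∃ x : Fin v₁ → Fin d₁ ⊕ Fin d₂, x = fun (k : Fin v₁) =>
        Sum.inl ⟨v₁ + (k : ℕ), by omega⟩ := ⟨_, rfl⟩
    have hτinj : Function.Injective τ := by
      rintro ⟨a, ha⟩ ⟨b, hb⟩ hab
      simp only [hτdef, Sum.inl.injEq, Fin.mk.injEq] at hab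
      exact Fin.ext (by simp only [Fin.val_mk]; omega)
    have hgτ1 : ∀ i, g (Sum.inl i) = 0 ∨ ∃ k, g (Sum.inl i) = (B ∘ τ) k := by
      rintro ⟨n, hn⟩
      simp only [hgdef, Sum.elim_inl]
      by_cases h : n < v₁
      · refine Or.inr ⟨⟨n, h⟩, ?_⟩
        rw [hg1v n hn h]
        simp only [Function.comp_apply, hτdef, Fin.val_mk]
      · rw [hg1z n hn h]; exact Or.inl rfl
    have hgτ2 : ∀ k, ∃ i, (B ∘ τ) k = g (Sum.inl i) := by
      rintro ⟨n, hn⟩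
      refine ⟨⟨n, by omega⟩, ?_⟩
      simp only [Function.comp_apply, hτdef, Fin.val_mk, hgdef, Sum.elim_inl]
      rw [hg1v n _ (by omega)]
    have hv₁ : Module.finrank ℂ (LinearMap.range (t.restrict hinv)) = v₁ := by
      have hst := Submodule.finrank_map_subtype_eq D₁ (LinearMap.range (t.restrict hinv))
      rw [map_range_restrict'] at hst
      rw [← hst, hmapD₁, span_range_eq_of' _ (B ∘ τ) hgτ1 hgτ2,
        finrank_span_comp' B.linearIndependent τ hτinj]
    -- rank of the quotient map
    obtain ⟨u, hudef⟩ : ∃ x : Fin d₂ → D ⧸ D₁, x = fun j => D₁.mkQ (B (Sum.inr j)) := ⟨_, rfl⟩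
    have hu_li : LinearIndependent ℂ u := by
      have hcomp : u = (D₁.mkQ ∘ₗ W.subtype) ∘ f := by
        funext j
        simp only [hudef, Function.comp_apply, LinearMap.comp_apply,
          Submodule.coe_subtype, hBr j]
      rw [hcomp]
      refine f.linearIndependent.map' _ ?_
      rw [LinearMap.ker_comp, Submodule.ker_mkQ]
      rw [eq_bot_iff]
      rintro x hx
      have hx' : (x : D) ∈ D₁ := hx
      have hx0 := Submodule.disjoint_def.mp hWc.disjoint x hx' x.2
      exact Subtype.ext (by simpa using hx0)
    obtain ⟨ρ, hρdef⟩ : ∃ x : Fin v₂ → Fin d₂, x = fun (k : Fin v₂) =>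
      (⟨v₂ + (k : ℕ), by omega⟩ : Fin d₂) := ⟨_, rfl⟩
    have hρinj : Function.Injective ρ := by
      rintro ⟨a, ha⟩ ⟨b, hb⟩ hab
      simp only [hρdef, Fin.mk.injEq] at hab
      exact Fin.ext (by simp only [Fin.val_mk]; omega)
    have hmq1 : ∀ idx, (D₁.mkQ ∘ g) idx = 0 ∨ ∃ k, (D₁.mkQ ∘ g) idx = (u ∘ ρ) k := by
      rintro (⟨n, hn⟩ | ⟨n, hn⟩) <;>
        simp only [Function.comp_apply, hgdef, Sum.elim_inl, Sum.elim_inr]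
      · left
        have hmem : g₁ ⟨n, hn⟩ ∈ D₁ := hg1D _
        rw [Submodule.mkQ_apply]
        exact (Submodule.Quotient.mk_eq_zero D₁).2 hmem
      · by_cases h : n < v₂
        · refine Or.inr ⟨⟨n, h⟩, ?_⟩
          rw [hg2v n hn h]
          simp only [Function.comp_apply, hudef, hρdef, Fin.val_mk]
        · by_cases h' : 2 * v₂ ≤ n ∧ n < 2 * v₂ + w
          · left
            rw [hg2m n hn h']
            rw [Submodule.mkQ_apply]
            exact (Submodule.Quotient.mk_eq_zero D₁).2 (hBlD _)
          · left
            rw [hg2z n hn h h', map_zero]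
    have hmq2 : ∀ k, (u ∘ ρ) k = (D₁.mkQ ∘ g) (Sum.inr ⟨(k : ℕ), by omega⟩) := by
      rintro ⟨n, hn⟩
      simp only [Function.comp_apply, hudef, hρdef, Fin.val_mk, hgdef, Sum.elim_inr]
      rw [hg2v n (by omega) hn]
    have hv₂ : Module.finrank ℂ
        (LinearMap.range (D₁.mapQ D₁ t (fun x hx => hinv x hx))) = v₂ := by
      rw [range_mapQ' ℂ D t D₁ (fun x hx => hinv x hx), hrange,
        Submodule.map_span, ← Set.range_comp,
        span_range_eq_of' _ (u ∘ ρ) hmq1 (fun k => ⟨Sum.inr ⟨(k : ℕ), by omega⟩, hmq2 k⟩),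
        finrank_span_comp' hu_li ρ hρinj]
    exact ⟨t, hinv, ht2, hv, hv₁, hv₂⟩
end

section
/- Let D be a complex vector space of dimension d = d¹ + d², D¹ ⊆ D a subspace of dimension d¹, and B ⊆ D a subspace with dim B = d − u¹ − u² and dim(D¹ ∩ B) = d¹ − u¹. Suppose t ∈ End(D) satisfies t² = 0, t(D¹) ⊆ D¹, rank(t|_{D¹}) = v¹, rank of the induced map on D/D¹ equals v², and im t ⊆ B ⊆ ker t. Then rank t ≤ min(u² + v¹, d¹ − u¹ + v²). -/
open Module LinearMap Submodule in
lemma aux_finrank_map_add {D D' : Type} [AddCommGroup D] [Module ℂ D] [FiniteDimensional ℂ D]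
    [AddCommGroup D'] [Module ℂ D'] (K : Submodule ℂ D) (f : D →ₗ[ℂ] D') :
    finrank ℂ (K.map f) + finrank ℂ ↥(K ⊓ ker f) = finrank ℂ K := by
  have h := (f.domRestrict K).finrank_range_add_finrank_ker
  rw [range_domRestrict, ker_domRestrict] at h
  have e : finrank ℂ ↥((ker f).comap K.subtype) = finrank ℂ ↥(K ⊓ ker f) := by
    rw [(Submodule.equivSubtypeMap K ((ker f).comap K.subtype)).finrank_eq,
      Submodule.map_comap_subtype]
  rwa [e] at h

/-- Let `D` be a complex vector space of dimension `d₁ + d₂`, `D₁ ⊆ D` a subspace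
of dimension `d₁`, and `B ⊆ D` with `dim B = d₁ + d₂ - u₁ - u₂` and
`dim (D₁ ∩ B) = d₁ - u₁`.  If `t ∈ End D` satisfies `t₂ = 0`, `t(D₁) ⊆ D₁`,
`rank (t|_{D₁}) = v₁`, rank of the induced map on `D/D₁` equals `v₂`, and
`im t ⊆ B ⊆ ker t`, then `rank t ≤ min (u₂ + v₁) (d₁ - u₁ + v₂)`. -/
theorem stmt7 (d₁ d₂ u₁ u₂ v₁ v₂ : ℕ)
    (hv1 : v₁ ≤ u₁) (hu1 : (u₁ : ℤ) ≤ (d₁ : ℤ) - v₁)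
    (hv2 : v₂ ≤ u₂) (hu2 : (u₂ : ℤ) ≤ (d₂ : ℤ) - v₂)
    (D : Type) [AddCommGroup D] [Module ℂ D] [FiniteDimensional ℂ D]
    (hD : Module.finrank ℂ D = d₁ + d₂)
    (D₁ B : Submodule ℂ D)
    (hD1 : Module.finrank ℂ D₁ = d₁)
    (hB : (Module.finrank ℂ B : ℤ) = (d₁ : ℤ) + d₂ - u₁ - u₂)
    (hDB : (Module.finrank ℂ ↥(D₁ ⊓ B) : ℤ) = (d₁ : ℤ) - u₁)
    (t : D →ₗ[ℂ] D) (ht : t ∘ₗ t = 0)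
    (hinv : ∀ x ∈ D₁, t x ∈ D₁)
    (hr1 : Module.finrank ℂ (LinearMap.range (t.restrict hinv)) = v₁)
    (hr2 : Module.finrank ℂ
      (LinearMap.range (D₁.mapQ D₁ t (fun x hx => hinv x hx))) = v₂)
    (hrange : LinearMap.range t ≤ B) (hker : B ≤ LinearMap.ker t) :
    (Module.finrank ℂ (LinearMap.range t) : ℤ) ≤
      min ((u₂ : ℤ) + v₁) ((d₁ : ℤ) - u₁ + v₂) := by
  classical
  -- rank--nullity for t
  have h0 := t.finrank_range_add_finrank_ker
  rw [hD] at h0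
  -- range of induced map on quotient equals image of range t
  have hq : Module.finrank ℂ ↥((LinearMap.range t).map D₁.mkQ) = v₂ := by
    have hcomp : (D₁.mapQ D₁ t (fun x hx => hinv x hx)) ∘ₗ D₁.mkQ = D₁.mkQ ∘ₗ t :=
      Submodule.mapQ_mkQ (p := D₁) (q := D₁) t
    have : LinearMap.range ((D₁.mapQ D₁ t (fun x hx => hinv x hx)) ∘ₗ D₁.mkQ)
        = (LinearMap.range t).map D₁.mkQ := by
      rw [hcomp, LinearMap.range_comp]
    rw [← this, LinearMap.range_comp_of_range_eq_top _ (Submodule.range_mkQ D₁)]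
    exact hr2
  -- decomposition of range t
  have hR := aux_finrank_map_add (LinearMap.range t) D₁.mkQ
  rw [Submodule.ker_mkQ, hq] at hR
  -- decomposition of B
  have hBd := aux_finrank_map_add B D₁.mkQ
  rw [Submodule.ker_mkQ] at hBd
  have hBD : Module.finrank ℂ ↥(B ⊓ D₁) = Module.finrank ℂ ↥(D₁ ⊓ B) := by rw [inf_comm]
  -- decomposition of ker t
  have hKd := aux_finrank_map_add (LinearMap.ker t) D₁.mkQ
  rw [Submodule.ker_mkQ] at hKd
  -- monotonicity facts
  have hm1 : Module.finrank ℂ ↥(B.map D₁.mkQ) ≤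
      Module.finrank ℂ ↥((LinearMap.ker t).map D₁.mkQ) :=
    Submodule.finrank_mono (Submodule.map_mono hker)
  have hm2 : Module.finrank ℂ ↥(LinearMap.range t ⊓ D₁) ≤
      Module.finrank ℂ ↥(D₁ ⊓ B) :=
    Submodule.finrank_mono (le_inf inf_le_right (le_trans inf_le_left hrange))
  -- kernel of restriction
  have h1 := (t.restrict hinv).finrank_range_add_finrank_ker
  rw [hr1, hD1, LinearMap.ker_restrict] at h1
  have h1' : Module.finrank ℂ ↥((LinearMap.ker t).comap D₁.subtype)
      = Module.finrank ℂ ↥(LinearMap.ker t ⊓ D₁) := by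
    rw [(Submodule.equivSubtypeMap D₁ ((LinearMap.ker t).comap D₁.subtype)).finrank_eq,
      Submodule.map_comap_subtype, inf_comm]
  rw [h1'] at h1
  -- D₁ ⊓ B ≤ ker t
  have hm3 : Module.finrank ℂ ↥(D₁ ⊓ B) ≤ Module.finrank ℂ ↥(LinearMap.ker t ⊓ D₁) :=
    Submodule.finrank_mono (le_inf (le_trans inf_le_right hker) inf_le_left)
  omega
end

section
/- Let D be a complex vector space of dimension d. The assignment (p, q) ↦ (q∘p, ker p) induces a bijection between GL(V)-orbits of pairs (p, q), with p : D → V surjective, q : V → D, p∘q = 0 and rank(q∘p) = v₀, and pairs (t, B) where t ∈ End(D), t² = 0, rank t = v₀, and B ⊆ D is a subspace with im t ⊆ B ⊆ ker t and dim B = d − dim V. -/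
/-- Let `D` be a complex vector space of dimension `d` and `V` of dimension `v`.
The assignment `(p, q) ↦ (q ∘ p, ker p)` induces a bijection between
`GL(V)`-orbits of pairs `(p : D → V surjective, q : V → D)` with `p ∘ q = 0`
and `rank (q ∘ p) = v₀`, and pairs `(t, B)` with `t ∈ End D`, `t² = 0`,
`rank t = v₀`, and `B ⊆ D` a subspace with `im t ⊆ B ⊆ ker t` and
`dim B = d - dim V`: the assignment is well defined, surjective, and injective
on `GL(V)`-orbits. -/
theorem stmt15 (v₀ : ℕ) (D V : Type)
    [AddCommGroup D] [Module ℂ D] [FiniteDimensional ℂ D]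
    [AddCommGroup V] [Module ℂ V] [FiniteDimensional ℂ V] :
    (∀ (p : D →ₗ[ℂ] V) (q : V →ₗ[ℂ] D), p ∘ₗ q = 0 → Function.Surjective p →
      Module.finrank ℂ (LinearMap.range (q ∘ₗ p)) = v₀ →
      ((q ∘ₗ p) ∘ₗ (q ∘ₗ p) = 0 ∧
        LinearMap.range (q ∘ₗ p) ≤ LinearMap.ker p ∧
        LinearMap.ker p ≤ LinearMap.ker (q ∘ₗ p) ∧
        (Module.finrank ℂ (LinearMap.ker p) : ℤ) =
          (Module.finrank ℂ D : ℤ) - Module.finrank ℂ V)) ∧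
    (∀ (t : D →ₗ[ℂ] D) (B : Submodule ℂ D), t ∘ₗ t = 0 →
      Module.finrank ℂ (LinearMap.range t) = v₀ →
      LinearMap.range t ≤ B → B ≤ LinearMap.ker t →
      (Module.finrank ℂ B : ℤ) =
        (Module.finrank ℂ D : ℤ) - Module.finrank ℂ V →
      ∃ (p : D →ₗ[ℂ] V) (q : V →ₗ[ℂ] D), p ∘ₗ q = 0 ∧
        Function.Surjective p ∧ q ∘ₗ p = t ∧ LinearMap.ker p = B) ∧
    (∀ (p p' : D →ₗ[ℂ] V) (q q' : V →ₗ[ℂ] D),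
      p ∘ₗ q = 0 → Function.Surjective p →
      p' ∘ₗ q' = 0 → Function.Surjective p' →
      q ∘ₗ p = q' ∘ₗ p' → LinearMap.ker p = LinearMap.ker p' →
      ∃ g : V ≃ₗ[ℂ] V, p' = (g : V →ₗ[ℂ] V) ∘ₗ p ∧
        q' = q ∘ₗ (g.symm : V →ₗ[ℂ] V)) := by
  refine ⟨?_, ?_, ?_⟩
  · intro p q hpq hp _
    refine ⟨?_, ?_, ?_, ?_⟩
    · ext x
      simp only [LinearMap.comp_apply, LinearMap.zero_apply]
      have : p (q (p x)) = 0 := by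
        have := congrArg (fun f => f (p x)) hpq
        simpa using this
      rw [this]; simp
    · rintro _ ⟨x, rfl⟩
      have := congrArg (fun f => f (p x)) hpq
      simpa using this
    · intro x hx
      simp only [LinearMap.mem_ker] at hx ⊢
      simp [LinearMap.comp_apply, hx]
    · have h := LinearMap.finrank_range_add_finrank_ker p
      rw [LinearMap.range_eq_top.mpr hp, finrank_top] at h
      omega
  · intro t B ht2 _ hrB hBk hdim
    have hd : Module.finrank ℂ D = Module.finrank ℂ B + Module.finrank ℂ V := by
      have := Submodule.finrank_le B
      omega
    have hq : Module.finrank ℂ (D ⧸ B) = Module.finrank ℂ V := by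
      have := Submodule.finrank_quotient_add_finrank B
      omega
    let e : (D ⧸ B) ≃ₗ[ℂ] V := LinearEquiv.ofFinrankEq _ _ hq
    let p : D →ₗ[ℂ] V := (e : (D ⧸ B) →ₗ[ℂ] V) ∘ₗ B.mkQ
    let tb : (D ⧸ B) →ₗ[ℂ] D := B.liftQ t hBk
    let q : V →ₗ[ℂ] D := tb ∘ₗ (e.symm : V →ₗ[ℂ] D ⧸ B)
    have hker : LinearMap.ker p = B := by
      have : LinearMap.ker p = Submodule.comap B.mkQ (LinearMap.ker (e : (D ⧸ B) →ₗ[ℂ] V)) :=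
        LinearMap.ker_comp _ _
      rw [this, LinearEquiv.ker, Submodule.comap_bot, Submodule.ker_mkQ]
    have hqrange : ∀ y : V, q y ∈ B := by
      intro y
      apply hrB
      obtain ⟨x, hx⟩ := Submodule.mkQ_surjective B (e.symm y)
      exact ⟨x, by simp [q, tb, LinearMap.comp_apply, ← hx]⟩
    refine ⟨p, q, ?_, ?_, ?_, hker⟩
    · ext y
      have : q y ∈ LinearMap.ker p := hker ▸ hqrange y
      simpa [LinearMap.comp_apply] using this
    · exact e.surjective.comp (Submodule.mkQ_surjective B)
    · ext x
      simp [q, p, tb, LinearMap.comp_apply]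
  · intro p p' q q' hpq hp hpq' hp' hqp hker
    set K := LinearMap.ker p with hK
    have hK' : K ≤ LinearMap.ker p := le_refl _
    have hK'' : K ≤ LinearMap.ker p' := hker.le
    let P : (D ⧸ K) →ₗ[ℂ] V := K.liftQ p hK'
    let P' : (D ⧸ K) →ₗ[ℂ] V := K.liftQ p' hK''
    have hPbij : Function.Bijective P := by
      constructor
      · rw [← LinearMap.ker_eq_bot]
        exact Submodule.ker_liftQ_eq_bot _ _ _ hK.ge
      · intro y
        obtain ⟨x, rfl⟩ := hp y
        exact ⟨K.mkQ x, by simp [P]⟩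
    have hP'bij : Function.Bijective P' := by
      constructor
      · rw [← LinearMap.ker_eq_bot]
        exact Submodule.ker_liftQ_eq_bot _ _ _ hker.ge
      · intro y
        obtain ⟨x, rfl⟩ := hp' y
        exact ⟨K.mkQ x, by simp [P']⟩
    let E : (D ⧸ K) ≃ₗ[ℂ] V := LinearEquiv.ofBijective P hPbij
    let E' : (D ⧸ K) ≃ₗ[ℂ] V := LinearEquiv.ofBijective P' hP'bij
    let g : V ≃ₗ[ℂ] V := E.symm.trans E'
    have hgp : ∀ x : D, g (p x) = p' x := by
      intro x
      have h1 : E (K.mkQ x) = p x := by simp [E, P]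
      have h2 : E.symm (p x) = K.mkQ x := by rw [← h1, LinearEquiv.symm_apply_apply]
      simp [g, h2, E', P']
    have hgp' : p' = (g : V →ₗ[ℂ] V) ∘ₗ p := by
      ext x; simp [LinearMap.comp_apply, hgp x]
    refine ⟨g, hgp', ?_⟩
    have hqg : ∀ y : V, q' (g y) = q y := by
      intro y
      obtain ⟨x, rfl⟩ := hp y
      rw [hgp x]
      have := congrArg (fun f => f x) hqp
      simpa using this.symm
    ext y
    have := hqg (g.symm y)
    simp only [LinearEquiv.apply_symm_apply] at this
    simpa [LinearMap.comp_apply] using this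
end

section
/- Consider the quiver with one vertex and no edges. The variety M(d, v₀, v) of pairs (t, B) with t ∈ End(ℂ^d), t² = 0, rank t = v₀, and B a subspace of ℂ^d with im t ⊆ B ⊆ ker t and dim B = d − v, is nonempty if and only if v₀ ≤ v ≤ d − v₀; when nonempty it is a smooth connected quasi-projective variety. -/
/-!
A pair `(t, B)` with `im t ⊆ B ⊆ ker t` on a finite-dimensional space `V` is determined up to
`GL(V)` by `rank t` and `dim B`. Choosing complements `P` of `ker t` in `V`, `D` of `B` in `ker t`
and `E` of `im t` in `B`, the map `P ⊕ D ⊕ E ⊕ P → V`, `(x, y, z, w) ↦ x + y + z + t w` is onto,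
hence by counting dimensions an isomorphism; it intertwines `t` with the model map
`(x, y, z, w) ↦ (0, 0, 0, x)` and carries `0 ⊕ 0 ⊕ E ⊕ P` onto `B`. So every such pair is conjugate
to a standard model depending only on `(rank t, dim ker t - dim B, dim B - rank t)`, which gives
transitivity, and realising the model in `ℂᵈ` gives existence; the numerical constraints come
from rank–nullity.
-/

open Module LinearMap Submodule

variable (K : Type*) [DivisionRing K]

abbrev SqZeroModel (a b c : ℕ) : Type _ :=
  (Fin a → K) × (Fin b → K) × (Fin c → K) × (Fin a → K)

namespace SqZeroModel

variable {K} {a b c : ℕ}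

def shift : SqZeroModel K a b c →ₗ[K] SqZeroModel K a b c :=
  (inr K _ _ ∘ₗ inr K _ _ ∘ₗ inr K _ _) ∘ₗ fst K _ _

def flag : Submodule K (SqZeroModel K a b c) :=
  range (inr K (Fin a → K) _ ∘ₗ inr K (Fin b → K) _ :
    (Fin c → K) × (Fin a → K) →ₗ[K] SqZeroModel K a b c)

@[simp] lemma shift_apply (m : SqZeroModel K a b c) : shift m = (0, 0, 0, m.1) := rfl

lemma range_shift_le_flag : range (shift : SqZeroModel K a b c →ₗ[K] _) ≤ flag := by
  rintro _ ⟨m, rfl⟩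
  exact ⟨(0, m.1), rfl⟩

lemma flag_le_ker_shift : (flag : Submodule K (SqZeroModel K a b c)) ≤ ker shift := by
  rintro _ ⟨m, rfl⟩
  rfl

lemma finrank_range_shift : finrank K (range (shift : SqZeroModel K a b c →ₗ[K] _)) = a := by
  rw [shift, range_comp_of_range_eq_top _ (range_fst), finrank_range_of_inj, finrank_fin_fun]
  exact inr_injective.comp (inr_injective.comp inr_injective)

lemma finrank_flag : finrank K (flag : Submodule K (SqZeroModel K a b c)) = c + a := by
  rw [flag, finrank_range_of_inj]
  · simp
  · exact inr_injective.comp inr_injective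

end SqZeroModel

open SqZeroModel

section

variable {K} {V : Type*} [AddCommGroup V] [Module K V] [FiniteDimensional K V]

theorem Submodule.exists_linearMap_range_sup_eq {q r : Submodule K V} (h : q ≤ r) {n : ℕ}
    (hn : n + finrank K q = finrank K r) :
    ∃ f : (Fin n → K) →ₗ[K] V, range f ⊔ q = r := by
  obtain ⟨C, hC⟩ := (q.comap r.subtype).exists_isCompl
  have hCn : finrank K (Fin n → K) = finrank K C := by
    have := finrank_add_eq_of_isCompl hC
    rw [(comapSubtypeEquivOfLe h).finrank_eq] at this
    rw [finrank_fin_fun]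
    omega
  refine ⟨r.subtype ∘ₗ C.subtype ∘ₗ (LinearEquiv.ofFinrankEq _ _ hCn : _ →ₗ[K] C), ?_⟩
  rw [range_comp, range_comp_of_range_eq_top _ (LinearEquiv.range _), range_subtype,
    ← inf_eq_right.2 h, ← map_comap_subtype, ← map_sup, hC.symm.sup_eq_top, map_subtype_top]

theorem exists_sqZeroModel_equiv {t : V →ₗ[K] V} {B : Submodule K V}
    (htB : range t ≤ B) (hBt : B ≤ ker t) {a b c : ℕ} (ha : finrank K (range t) = a)
    (hb : b + finrank K B = finrank K (ker t)) (hc : c + a = finrank K B) :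
    ∃ Φ : SqZeroModel K a b c ≃ₗ[K] V, (∀ m, t (Φ m) = Φ (shift m)) ∧ flag.map Φ.toLinearMap = B := by
  have hrank := finrank_range_add_finrank_ker t
  obtain ⟨fP, hP⟩ := exists_linearMap_range_sup_eq (le_top : ker t ≤ ⊤) (n := a)
    (by rw [finrank_top]; omega)
  obtain ⟨fD, hD⟩ := exists_linearMap_range_sup_eq hBt hb
  obtain ⟨fE, hE⟩ := exists_linearMap_range_sup_eq htB (n := c) (by omega)
  have htP : range (t ∘ₗ fP) = range t := by
    rw [range_comp, range_eq_map t, ← hP, Submodule.map_sup]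
    exact (sup_eq_left.2 ((map_comap_le t ⊥).trans bot_le)).symm
  set Φ₀ := fP.coprod (fD.coprod (fE.coprod (t ∘ₗ fP)))
  have hsurj : range Φ₀ = ⊤ := by
    simp only [Φ₀, range_coprod, htP, hE, hD, hP]
  have hdim : finrank K (SqZeroModel K a b c) = finrank K V := by
    simp only [finrank_prod, finrank_fin_fun]
    omega
  have hbij : Function.Bijective Φ₀ :=
    ⟨(injective_iff_surjective_of_finrank_eq_finrank hdim).2 (range_eq_top.1 hsurj),
      range_eq_top.1 hsurj⟩
  have hDt : ∀ y, t (fD y) = 0 := fun y => (hD ▸ le_sup_left : range fD ≤ ker t) ⟨y, rfl⟩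
  have hEt : ∀ z, t (fE z) = 0 := fun z => hBt ((hE ▸ le_sup_left : range fE ≤ B) ⟨z, rfl⟩)
  have htt : ∀ x, t (t x) = 0 := fun x => hBt (htB ⟨x, rfl⟩)
  refine ⟨.ofBijective Φ₀ hbij, fun ⟨x, y, z, w⟩ => ?_, ?_⟩
  · simp [Φ₀, hDt, hEt, htt]
  · rw [flag, ← range_comp]
    show range ((Φ₀ ∘ₗ inr K _ _) ∘ₗ inr K _ _) = B
    simp only [Φ₀, coprod_inr, range_coprod, htP, hE]

theorem exists_linearEquiv_conj_of_finrank_eq {t t' : V →ₗ[K] V} {B B' : Submodule K V}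
    (htB : range t ≤ B) (hBt : B ≤ ker t) (htB' : range t' ≤ B') (hBt' : B' ≤ ker t')
    (hrank : finrank K (range t) = finrank K (range t')) (hB : finrank K B = finrank K B') :
    ∃ g : V ≃ₗ[K] V, t' = (g : V →ₗ[K] V) ∘ₗ t ∘ₗ (g.symm : V →ₗ[K] V) ∧
      B' = B.map (g : V →ₗ[K] V) := by
  obtain ⟨b, hb⟩ : ∃ b, b + finrank K B = finrank K (ker t) :=
    ⟨_, Nat.sub_add_cancel (Submodule.finrank_mono hBt)⟩
  obtain ⟨c, hc⟩ : ∃ c, c + finrank K (range t) = finrank K B :=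
    ⟨_, Nat.sub_add_cancel (Submodule.finrank_mono htB)⟩
  have hker : finrank K (ker t) = finrank K (ker t') := by
    have := finrank_range_add_finrank_ker t
    have := finrank_range_add_finrank_ker t'
    omega
  obtain ⟨Φ, hΦt, rfl⟩ := exists_sqZeroModel_equiv htB hBt rfl hb hc
  obtain ⟨Φ', hΦt', rfl⟩ := exists_sqZeroModel_equiv htB' hBt' hrank.symm
    (hker ▸ hB ▸ hb) (hB ▸ hc)
  refine ⟨Φ.symm.trans Φ', LinearMap.ext fun x => ?_, ?_⟩
  · obtain ⟨m, rfl⟩ := Φ'.surjective x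
    simp [hΦt, hΦt']
  · rw [← Submodule.map_comp]
    congr 1
    exact LinearMap.ext fun m => by simp

theorem exists_range_le_le_ker {d r v : ℕ} (hV : finrank K V = d) (hr : r ≤ v) (hv : v + r ≤ d) :
    ∃ (t : V →ₗ[K] V) (B : Submodule K V), range t ≤ B ∧ B ≤ ker t ∧
      finrank K (range t) = r ∧ finrank K B + v = d := by
  have hdim : finrank K (SqZeroModel K r (v - r) (d - v - r)) = finrank K V := by
    simp only [finrank_prod, finrank_fin_fun]
    omega
  set e := LinearEquiv.ofFinrankEq _ _ hdim
  refine ⟨e.toLinearMap ∘ₗ shift ∘ₗ e.symm.toLinearMap, flag.map e.toLinearMap, ?_, ?_, ?_, ?_⟩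
  · rintro _ ⟨x, rfl⟩
    exact ⟨_, range_shift_le_flag ⟨_, rfl⟩, rfl⟩
  · rintro _ ⟨m, hm, rfl⟩
    simp [-shift_apply, mem_ker.1 (flag_le_ker_shift hm)]
  · rw [range_comp, range_comp_of_range_eq_top _ e.symm.range, e.finrank_map_eq,
      finrank_range_shift]
  · rw [e.finrank_map_eq, finrank_flag]
    omega

end

/-- Smoothness and connectedness are expressed by the transitivity of the action
`g · (t, B) = (g t g⁻¹, g B)` of the connected group `GL(d, ℂ)`, which makes `M(d, v₀, v)` a
homogeneous space. -/
theorem stmt16 (d v₀ v : ℕ) :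
    ((∃ (t : (Fin d → ℂ) →ₗ[ℂ] (Fin d → ℂ)) (B : Submodule ℂ (Fin d → ℂ)),
        t ∘ₗ t = 0 ∧ Module.finrank ℂ (LinearMap.range t) = v₀ ∧
        LinearMap.range t ≤ B ∧ B ≤ LinearMap.ker t ∧
        (Module.finrank ℂ B : ℤ) = (d : ℤ) - v) ↔
      (v₀ ≤ v ∧ (v : ℤ) ≤ (d : ℤ) - v₀)) ∧
    (∀ (t t' : (Fin d → ℂ) →ₗ[ℂ] (Fin d → ℂ)) (B B' : Submodule ℂ (Fin d → ℂ)),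
      t ∘ₗ t = 0 → Module.finrank ℂ (LinearMap.range t) = v₀ →
      LinearMap.range t ≤ B → B ≤ LinearMap.ker t →
      (Module.finrank ℂ B : ℤ) = (d : ℤ) - v →
      t' ∘ₗ t' = 0 → Module.finrank ℂ (LinearMap.range t') = v₀ →
      LinearMap.range t' ≤ B' → B' ≤ LinearMap.ker t' →
      (Module.finrank ℂ B' : ℤ) = (d : ℤ) - v →
      ∃ g : (Fin d → ℂ) ≃ₗ[ℂ] (Fin d → ℂ),
        t' = (g : (Fin d → ℂ) →ₗ[ℂ] (Fin d → ℂ)) ∘ₗ t ∘ₗ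
          (g.symm : (Fin d → ℂ) →ₗ[ℂ] (Fin d → ℂ)) ∧
        B' = B.map (g : (Fin d → ℂ) →ₗ[ℂ] (Fin d → ℂ))) := by
  have hd : finrank ℂ (Fin d → ℂ) = d := finrank_fin_fun ℂ
  refine ⟨⟨?_, ?_⟩, ?_⟩
  · rintro ⟨t, B, -, rfl, htB, hBt, hB⟩
    have := finrank_range_add_finrank_ker t
    have := Submodule.finrank_mono htB
    have := Submodule.finrank_mono hBt
    omega
  · rintro ⟨h₁, h₂⟩
    obtain ⟨t, B, htB, hBt, rfl, hB⟩ := exists_range_le_le_ker hd h₁ (by omega)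
    exact ⟨t, B, range_le_ker_iff.1 (htB.trans hBt), rfl, htB, hBt, by omega⟩
  · intro t t' B B' _ ht htB hBt hB _ ht' htB' hBt' hB'
    exact exists_linearEquiv_conj_of_finrank_eq htB hBt htB' hBt' (ht.trans ht'.symm) (by omega)
end
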